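/- Let 0 < α < 1 and let Π be a Borel measure on (0,∞) whose tail Π̄(x) = Π((x,∞)) is finite for x > 0, regularly varying at 0 with index -α, and satisfies Π̄(x) → ∞ as x ↓ 0. Then there exist constants c' > 0, β > 0 and z₁ > 0 such that for all λ > 0, all t > 0 and all w > y > 0 with y/t ≥ z₁, t·∫_{(0,a)} (1 − e^{-λx/b}) Π(dx) ≤ c'·λ·y·(y/w)^β, where a = Π̄^←(w/t) and b = Π̄^←(y/t). -/

import Mathlib

open MeasureTheory ProbabilityTheory Filter Topology

noncomputable def geninv (f : ℝ → ℝ) (y : ℝ) : ℝ := sInf {x : ℝ | 0 < x ∧ f x ≤ y}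

/-!
Fix `K` with `max 1 2^α < K < 2`. Regular variation gives the doubling bound
`Π̄(x/2) ≤ K Π̄(x)` on some interval `(0, X)`, and `y/t ≥ z₁` keeps `a` and `b` inside it.
Iterating the bound shows that multiplying the level by `K` at least halves `Π̄^←`, so
`a/b ≤ 2 (y/w)^ρ` with `ρ = log_K 2 > 1`; it also gives `Π̄(a/2^j) ≤ K^(j+1) w/t`.
Splitting `(0, a)` into the dyadic shells `(a/2^(j+1), a/2^j]`, the first moment of `Π` on
`(0, a)` is at most a geometric series in `K/2`, hence `≲ a w/t`, and `1 - e^(-u) ≤ u` turns this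
into `t ∫ ≲ λ w a/b ≲ λ y (y/w)^(ρ-1)`.
-/

open Set Real

namespace MeasureTheory.Measure

/-- The tail `Π̄` of a measure; `toReal` makes it `0` wherever `μ (Ioi x) = ∞`. -/
noncomputable def tail (μ : Measure ℝ) (x : ℝ) : ℝ := (μ (Ioi x)).toReal

variable {μ : Measure ℝ}

lemma tail_nonneg (x : ℝ) : 0 ≤ μ.tail x := ENNReal.toReal_nonneg

lemma ofReal_tail (hfin : ∀ x, 0 < x → μ (Ioi x) < ⊤) {x : ℝ} (hx : 0 < x) :
    ENNReal.ofReal (μ.tail x) = μ (Ioi x) :=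
  ENNReal.ofReal_toReal (hfin x hx).ne

lemma antitoneOn_tail (hfin : ∀ x, 0 < x → μ (Ioi x) < ⊤) : AntitoneOn μ.tail (Ioi 0) :=
  fun _ hu _ _ huv => ENNReal.toReal_mono (hfin _ hu).ne (measure_mono (Ioi_subset_Ioi huv))

end MeasureTheory.Measure

section geninv

variable {f : ℝ → ℝ} {c x : ℝ}

lemma geninv_le (hx : 0 < x) (hfx : f x ≤ c) : geninv f c ≤ x :=
  csInf_le ⟨0, fun _ hz => hz.1.le⟩ ⟨hx, hfx⟩

lemma geninv_nonneg : 0 ≤ geninv f c :=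
  Real.sInf_nonneg fun _ hz => hz.1.le

lemma geninv_pos (hf : Tendsto f (𝓝[>] 0) atTop) (hne : {x | 0 < x ∧ f x ≤ c}.Nonempty) :
    0 < geninv f c := by
  obtain ⟨δ, hδ, hfδ⟩ := (nhdsGT_basis (0 : ℝ)).eventually_iff.mp (hf.eventually_gt_atTop c)
  refine hδ.trans_le (le_csInf hne ?_)
  rintro x ⟨hx, hxc⟩
  by_contra! hxδ
  exact (hfδ ⟨hx, hxδ⟩).not_ge hxc

lemma geninv_mem_Ioo (hf : Tendsto f (𝓝[>] 0) atTop) {X : ℝ} (hx : x ∈ Ioo 0 X) (hfx : f x ≤ c) :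
    geninv f c ∈ Ioo 0 X :=
  ⟨geninv_pos hf ⟨x, hx.1, hfx⟩, (geninv_le hx.1 hfx).trans_lt hx.2⟩

lemma apply_le_of_geninv_lt (hf : AntitoneOn f (Ioi 0)) (hne : {x | 0 < x ∧ f x ≤ c}.Nonempty)
    (h : geninv f c < x) : f x ≤ c := by
  obtain ⟨z, ⟨hz, hzc⟩, hzx⟩ := exists_lt_of_csInf_lt hne h
  exact (hf hz (hz.trans hzx) hzx.le).trans hzc

end geninv

lemma exists_pow_le_and_inv_two_pow_le {K r : ℝ} (hK : 1 < K) (hr : 1 ≤ r) :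
    ∃ k : ℕ, K ^ k ≤ r ∧ (2 ^ k)⁻¹ ≤ 2 * r⁻¹ ^ logb K 2 := by
  obtain ⟨k, hk, hk1⟩ := exists_nat_pow_near hr hK
  have hρ : r ^ logb K 2 < 2 ^ k * 2 := calc
    r ^ logb K 2 < (K ^ (k + 1)) ^ logb K 2 :=
      rpow_lt_rpow (by linarith) hk1 (logb_pos hK one_lt_two)
    _ = 2 ^ k * 2 := by
      rw [← rpow_pow_comm (by linarith), rpow_logb (by linarith) hK.ne' two_pos, pow_succ]
  refine ⟨k, hk, ?_⟩
  rw [inv_rpow (by linarith), ← div_eq_mul_inv, le_div_iff₀ (by positivity),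
    inv_mul_le_iff₀ (by positivity)]
  exact hρ.le

section doubling

variable {f : ℝ → ℝ} {K X : ℝ}

lemma eventually_apply_half_le {L : ℝ}
    (hf : Tendsto (fun x => f (1 / 2 * x) / f x) (𝓝[>] 0) (𝓝 L)) (hLK : L < K)
    (hpos : ∀ᶠ x in 𝓝[>] 0, 0 < f x) : ∀ᶠ x in 𝓝[>] (0 : ℝ), f (x / 2) ≤ K * f x := by
  filter_upwards [hf.eventually_lt_const hLK, hpos] with x hlt hx
  rw [div_lt_iff₀ hx] at hlt
  rw [div_eq_inv_mul, ← one_div]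
  exact hlt.le

lemma exists_apply_half_le_of_tendsto {α : ℝ} (hα : α < 1)
    (hf : Tendsto (fun x => f (1 / 2 * x) / f x) (𝓝[>] 0) (𝓝 ((1 / 2) ^ (-α))))
    (hpos : ∀ᶠ x in 𝓝[>] 0, 0 < f x) :
    ∃ K, 1 < K ∧ K < 2 ∧ ∃ X > 0, ∀ x ∈ Ioo 0 X, f (x / 2) ≤ K * f x := by
  have h2α : (1 / 2 : ℝ) ^ (-α) < 2 := by
    rw [one_div, inv_rpow zero_le_two, rpow_neg zero_le_two, inv_inv]
    simpa using rpow_lt_rpow_of_exponent_lt one_lt_two hα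
  obtain ⟨K, hK, hK2⟩ := exists_between (max_lt one_lt_two h2α)
  obtain ⟨X, hX, hdbl⟩ := (nhdsGT_basis (0 : ℝ)).eventually_iff.mp <|
    eventually_apply_half_le hf ((le_max_right _ _).trans_lt hK) hpos
  exact ⟨K, (le_max_left _ _).trans_lt hK, hK2, X, hX, hdbl⟩

lemma apply_div_two_pow_le (hK : 0 ≤ K) (hdbl : ∀ x ∈ Ioo 0 X, f (x / 2) ≤ K * f x)
    {x : ℝ} (hx : x ∈ Ioo 0 X) : ∀ k : ℕ, f (x / 2 ^ k) ≤ K ^ k * f x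
  | 0 => by simp
  | k + 1 => by
    have hxk : x / 2 ^ k ∈ Ioo 0 X :=
      ⟨by have := hx.1; positivity, (div_le_self hx.1.le (one_le_pow₀ one_le_two)).trans_lt hx.2⟩
    calc f (x / 2 ^ (k + 1)) = f (x / 2 ^ k / 2) := by rw [pow_succ, div_div]
      _ ≤ K * f (x / 2 ^ k) := hdbl _ hxk
      _ ≤ K * (K ^ k * f x) := by gcongr; exact apply_div_two_pow_le hK hdbl hx k
      _ = K ^ (k + 1) * f x := by ring

variable {c : ℝ}

lemma apply_div_two_pow_le_of_geninv_lt (hf : AntitoneOn f (Ioi 0)) (hK : 0 ≤ K)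
    (hdbl : ∀ x ∈ Ioo 0 X, f (x / 2) ≤ K * f x) (hne : {x | 0 < x ∧ f x ≤ c}.Nonempty)
    {x : ℝ} (hx : geninv f c < x) (hxX : x < X) (k : ℕ) : f (x / 2 ^ k) ≤ K ^ k * c := by
  have hx0 : x ∈ Ioo 0 X := ⟨geninv_nonneg.trans_lt hx, hxX⟩
  calc f (x / 2 ^ k) ≤ K ^ k * f x := apply_div_two_pow_le hK hdbl hx0 k
    _ ≤ K ^ k * c := by gcongr; exact apply_le_of_geninv_lt hf hne hx

lemma geninv_mul_two_pow_le (hf : AntitoneOn f (Ioi 0)) (hK : 0 ≤ K)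
    (hdbl : ∀ x ∈ Ioo 0 X, f (x / 2) ≤ K * f x) (hne : {x | 0 < x ∧ f x ≤ c}.Nonempty)
    (hcX : geninv f c < X) {c' : ℝ} {k : ℕ} (hcc' : K ^ k * c ≤ c') :
    geninv f c' * 2 ^ k ≤ geninv f c := by
  by_contra! h
  obtain ⟨x, hcx, hx⟩ := exists_between (lt_min h hcX)
  have hx0 : 0 < x := geninv_nonneg.trans_lt hcx
  have := geninv_le (f := f) (by positivity)
    ((apply_div_two_pow_le_of_geninv_lt hf hK hdbl hne hcx (hx.trans_le (min_le_right _ _)) k).trans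
      hcc')
  rw [le_div_iff₀ (by positivity)] at this
  exact (this.trans_lt (hx.trans_le (min_le_left _ _))).false

lemma geninv_div_geninv_le (hf : AntitoneOn f (Ioi 0)) (hK : 1 < K)
    (hdbl : ∀ x ∈ Ioo 0 X, f (x / 2) ≤ K * f x) (hne : {x | 0 < x ∧ f x ≤ c}.Nonempty)
    (hc0 : 0 < geninv f c) (hcX : geninv f c < X) (hc : 0 < c) {c' : ℝ} (hcc' : c ≤ c') :
    geninv f c' / geninv f c ≤ 2 * (c / c') ^ logb K 2 := by
  obtain ⟨k, hk, hk2⟩ := exists_pow_le_and_inv_two_pow_le hK ((one_le_div hc).2 hcc')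
  have hmul : geninv f c' * 2 ^ k ≤ geninv f c :=
    geninv_mul_two_pow_le hf (by linarith) hdbl hne hcX (by rwa [le_div_iff₀ hc] at hk)
  calc geninv f c' / geninv f c ≤ (2 ^ k)⁻¹ := by
        rw [div_le_iff₀ hc0, inv_mul_eq_div, le_div_iff₀ (by positivity)]
        exact hmul
    _ ≤ 2 * (c / c') ^ logb K 2 := by rwa [inv_div] at hk2

lemma apply_geninv_div_two_pow_le (hf : AntitoneOn f (Ioi 0)) (hK : 0 ≤ K)
    (hdbl : ∀ x ∈ Ioo 0 X, f (x / 2) ≤ K * f x) (hne : {x | 0 < x ∧ f x ≤ c}.Nonempty)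
    (ha : 0 < geninv f c) (haX : geninv f c < X) (j : ℕ) :
    f (geninv f c / 2 ^ j) ≤ K ^ (j + 1) * c := by
  obtain ⟨x, hax, hx⟩ := exists_between (lt_min (lt_two_mul_self ha) haX)
  have hx0 : 0 < x := ha.trans hax
  have hle : x / 2 ^ (j + 1) ≤ geninv f c / 2 ^ j := by
    rw [pow_succ', ← div_div]
    gcongr
    linarith [hx.trans_le (min_le_left _ _)]
  calc f (geninv f c / 2 ^ j) ≤ f (x / 2 ^ (j + 1)) :=
        hf (mem_Ioi.2 (by positivity)) (mem_Ioi.2 (by positivity)) hle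
    _ ≤ K ^ (j + 1) * c :=
        apply_div_two_pow_le_of_geninv_lt hf hK hdbl hne hax (hx.trans_le (min_le_right _ _)) _

end doubling

lemma Ioo_subset_iUnion_Ioc_div_two_pow (a : ℝ) :
    Ioo 0 a ⊆ ⋃ j : ℕ, Ioc (a / 2 ^ (j + 1)) (a / 2 ^ j) := by
  rintro x ⟨hx, hxa⟩
  obtain ⟨j, hj, hj1⟩ := exists_nat_pow_near ((one_le_div hx).2 hxa.le) one_lt_two
  refine mem_iUnion.2 ⟨j, ?_, ?_⟩
  · rw [div_lt_iff₀ hx] at hj1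
    rw [div_lt_iff₀ (by positivity)]
    linarith
  · rw [le_div_iff₀ hx] at hj
    rw [le_div_iff₀ (by positivity)]
    linarith

lemma lintegral_Ioo_ofReal_le_of_tail_le {μ : Measure ℝ} {a C K : ℝ} (ha : 0 ≤ a) (hK : 0 ≤ K)
    (hK2 : K < 2) (htail : ∀ j : ℕ, μ (Ioi (a / 2 ^ (j + 1))) ≤ ENNReal.ofReal (C * K ^ j)) :
    ∫⁻ x in Ioo 0 a, ENNReal.ofReal x ∂μ ≤ ENNReal.ofReal (a * C / (1 - K / 2)) := by
  have hK2' : 0 < 1 - K / 2 := by linarith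
  have hterm : ∀ j : ℕ, ∫⁻ x in Ioc (a / 2 ^ (j + 1)) (a / 2 ^ j), ENNReal.ofReal x ∂μ ≤
      ENNReal.ofReal (a * C) * ENNReal.ofReal (K / 2) ^ j := fun j => calc
    _ ≤ ∫⁻ _ in Ioc (a / 2 ^ (j + 1)) (a / 2 ^ j), ENNReal.ofReal (a / 2 ^ j) ∂μ :=
        setLIntegral_mono measurable_const fun x hx => ENNReal.ofReal_le_ofReal hx.2
    _ = ENNReal.ofReal (a / 2 ^ j) * μ (Ioc (a / 2 ^ (j + 1)) (a / 2 ^ j)) := setLIntegral_const _ _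
    _ ≤ ENNReal.ofReal (a / 2 ^ j) * ENNReal.ofReal (C * K ^ j) := by
        gcongr
        exact (measure_mono Ioc_subset_Ioi_self).trans (htail j)
    _ = ENNReal.ofReal (a * C) * ENNReal.ofReal (K / 2) ^ j := by
        rw [← ENNReal.ofReal_mul (by positivity), ← ENNReal.ofReal_pow (by positivity),
          ← ENNReal.ofReal_mul' (by positivity)]
        congr 1
        rw [div_pow]
        field_simp
  calc ∫⁻ x in Ioo 0 a, ENNReal.ofReal x ∂μ
      ≤ ∑' j : ℕ, ∫⁻ x in Ioc (a / 2 ^ (j + 1)) (a / 2 ^ j), ENNReal.ofReal x ∂μ :=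
        (lintegral_mono_set (Ioo_subset_iUnion_Ioc_div_two_pow a)).trans (lintegral_iUnion_le _ _)
    _ ≤ ∑' j : ℕ, ENNReal.ofReal (a * C) * ENNReal.ofReal (K / 2) ^ j := ENNReal.tsum_le_tsum hterm
    _ = ENNReal.ofReal (a * C / (1 - K / 2)) := by
        rw [ENNReal.tsum_mul_left, ENNReal.tsum_geometric, ← ENNReal.ofReal_one,
          ← ENNReal.ofReal_sub _ (by positivity), ← ENNReal.ofReal_inv_of_pos hK2',
          ← ENNReal.ofReal_mul' (inv_nonneg.2 hK2'.le), div_eq_mul_inv (a * C)]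

lemma setIntegral_one_sub_exp_le {μ : Measure ℝ} {s : Set ℝ} {lam b M : ℝ} (hs : MeasurableSet s)
    (hs0 : s ⊆ Ici 0) (hlam : 0 ≤ lam) (hb : 0 ≤ b) (hM : 0 ≤ M)
    (h : ∫⁻ x in s, ENNReal.ofReal x ∂μ ≤ ENNReal.ofReal M) :
    ∫ x in s, (1 - exp (-lam * x / b)) ∂μ ≤ lam / b * M := by
  have hle : ∀ x, 1 - exp (-lam * x / b) ≤ lam / b * x := fun x => by
    have := add_one_le_exp (-lam * x / b)
    linarith [show -lam * x / b = -(lam / b * x) by ring]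
  have hnn : 0 ≤ᵐ[μ.restrict s] fun x => 1 - exp (-lam * x / b) :=
    ae_restrict_of_forall_mem hs fun x hx => by
      have : -lam * x / b ≤ 0 := div_nonpos_of_nonpos_of_nonneg
        (by nlinarith [show (0 : ℝ) ≤ x from hs0 hx]) hb
      simpa using exp_le_one_iff.2 this
  rw [integral_eq_lintegral_of_nonneg_ae hnn (by fun_prop)]
  calc _ ≤ (ENNReal.ofReal (lam / b) * ENNReal.ofReal M).toReal := by
        gcongr
        · finiteness
        calc ∫⁻ x in s, ENNReal.ofReal (1 - exp (-lam * x / b)) ∂μ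
            ≤ ∫⁻ x in s, ENNReal.ofReal (lam / b) * ENNReal.ofReal x ∂μ :=
              lintegral_mono fun x => by
                rw [← ENNReal.ofReal_mul (by positivity)]
                exact ENNReal.ofReal_le_ofReal (hle x)
          _ = ENNReal.ofReal (lam / b) * ∫⁻ x in s, ENNReal.ofReal x ∂μ :=
              lintegral_const_mul' _ _ ENNReal.ofReal_ne_top
          _ ≤ _ := by gcongr
    _ = lam / b * M := by
        rw [ENNReal.toReal_mul, ENNReal.toReal_ofReal (by positivity), ENNReal.toReal_ofReal hM]

lemma integral_Ioo_geninv_tail_le {μ : Measure ℝ} (hfin : ∀ x, 0 < x → μ (Ioi x) < ⊤)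
    {K X c lam b : ℝ} (hK : 0 ≤ K) (hK2 : K < 2)
    (hdbl : ∀ x ∈ Ioo 0 X, μ.tail (x / 2) ≤ K * μ.tail x)
    (hne : {x | 0 < x ∧ μ.tail x ≤ c}.Nonempty) (ha : 0 < geninv μ.tail c)
    (haX : geninv μ.tail c < X) (hlam : 0 ≤ lam) (hb : 0 ≤ b) :
    ∫ x in Ioo 0 (geninv μ.tail c), (1 - exp (-lam * x / b)) ∂μ ≤
      lam / b * (geninv μ.tail c * (K ^ 2 * c) / (1 - K / 2)) := by
  have hc : 0 ≤ c := let ⟨x, _, hx⟩ := hne; (μ.tail_nonneg x).trans hx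
  have htail (j : ℕ) :
      μ (Ioi (geninv μ.tail c / 2 ^ (j + 1))) ≤ ENNReal.ofReal (K ^ 2 * c * K ^ j) := by
    rw [← μ.ofReal_tail hfin (by positivity)]
    refine ENNReal.ofReal_le_ofReal ?_
    calc μ.tail (geninv μ.tail c / 2 ^ (j + 1)) ≤ K ^ (j + 1 + 1) * c :=
          apply_geninv_div_two_pow_le (μ.antitoneOn_tail hfin) hK hdbl hne ha haX (j + 1)
      _ = K ^ 2 * c * K ^ j := by ring
  exact setIntegral_one_sub_exp_le measurableSet_Ioo (fun _ hx => mem_Ici.2 hx.1.le) hlam hb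
    (div_nonneg (by positivity) (by linarith))
    (lintegral_Ioo_ofReal_le_of_tail_le ha.le hK hK2 htail)

theorem stmt11_general (α : ℝ) (hα1 : α < 1)
    (Pi : Measure ℝ)
    (tb : ℝ → ℝ) (htb : ∀ x : ℝ, tb x = (Pi (Set.Ioi x)).toReal)
    (hfin : ∀ x : ℝ, 0 < x → Pi (Set.Ioi x) < ⊤)
    (hrv : ∀ l : ℝ, 0 < l →
      Tendsto (fun x : ℝ => tb (l * x) / tb x) (nhdsWithin 0 (Set.Ioi 0)) (nhds (l ^ (-α))))
    (hinf : Tendsto tb (nhdsWithin 0 (Set.Ioi 0)) atTop) :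
    ∃ c' : ℝ, 0 < c' ∧ ∃ β : ℝ, 0 < β ∧ ∃ z₁ : ℝ, 0 < z₁ ∧
      ∀ lam : ℝ, 0 < lam → ∀ t : ℝ, 0 < t → ∀ w y : ℝ, 0 < y → y < w → z₁ ≤ y / t →
        t * ∫ x in Set.Ioo 0 (geninv tb (w / t)),
            (1 - Real.exp (-lam * x / geninv tb (y / t))) ∂Pi ≤
          c' * lam * y * (y / w) ^ β := by
  obtain rfl : tb = Pi.tail := funext htb
  obtain ⟨K, hK1, hK2, X, hX, hdbl⟩ :=
    exists_apply_half_le_of_tendsto hα1 (hrv _ one_half_pos) (hinf.eventually_gt_atTop 0)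
  have hρ : 1 < logb K 2 := (lt_logb_iff_rpow_lt hK1 two_pos).2 (by rwa [rpow_one])
  have hK2' : 0 < 1 - K / 2 := by linarith
  refine ⟨2 * K ^ 2 / (1 - K / 2), by positivity, logb K 2 - 1, by linarith,
    Pi.tail (X / 2) + 1, by linarith [Pi.tail_nonneg (X / 2)], ?_⟩
  intro lam hlam t ht w y hy hyw hyt
  have hw : 0 < w := hy.trans hyw
  have hX2 : X / 2 ∈ Ioo 0 X := ⟨half_pos hX, half_lt_self hX⟩
  have hy' : Pi.tail (X / 2) ≤ y / t := by linarith
  have hyw' : y / t ≤ w / t := by gcongr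
  have hw' : Pi.tail (X / 2) ≤ w / t := hy'.trans hyw'
  set a := geninv Pi.tail (w / t)
  set b := geninv Pi.tail (y / t)
  have ha : a ∈ Ioo 0 X := geninv_mem_Ioo hinf hX2 hw'
  have hb : b ∈ Ioo 0 X := geninv_mem_Ioo hinf hX2 hy'
  have hab : a / b ≤ 2 * (y / w) ^ logb K 2 := by
    simpa only [div_div_div_cancel_right₀ ht.ne'] using geninv_div_geninv_le
      (Pi.antitoneOn_tail hfin) hK1 hdbl ⟨_, hX2.1, hy'⟩ hb.1 hb.2 (by positivity) hyw'
  calc t * ∫ x in Ioo 0 a, (1 - exp (-lam * x / b)) ∂Pi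
      ≤ t * (lam / b * (a * (K ^ 2 * (w / t)) / (1 - K / 2))) := by
        gcongr
        exact integral_Ioo_geninv_tail_le hfin (by linarith) hK2 hdbl ⟨_, hX2.1, hw'⟩ ha.1 ha.2
          hlam.le hb.1.le
    _ = K ^ 2 / (1 - K / 2) * lam * w * (a / b) := by field_simp
    _ ≤ K ^ 2 / (1 - K / 2) * lam * w * (2 * (y / w) ^ logb K 2) := by gcongr
    _ = 2 * K ^ 2 / (1 - K / 2) * lam * y * (y / w) ^ (logb K 2 - 1) := by
        rw [rpow_sub_one (div_pos hy hw).ne']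
        field_simp

/-- for `0 < α < 1` and a measure `Π` on `(0,∞)` with tail `Π̄` finite on
`(0,∞)`, regularly varying at 0 with index `-α`, and `Π̄(x) → ∞` as `x ↓ 0`, there exist
`c' > 0`, `β > 0`, `z₁ > 0` such that for all `λ > 0`, `t > 0` and `w > y > 0` with
`y/t ≥ z₁`, `t ∫_{(0,a)} (1 − e^{-λx/b}) Π(dx) ≤ c' λ y (y/w)^β` with `a = Π̄^←(w/t)`,
`b = Π̄^←(y/t)`. -/
theorem stmt11 (α : ℝ) (hα0 : 0 < α) (hα1 : α < 1)
    (Pi : Measure ℝ) (hPisupp : Pi (Set.Iic 0) = 0)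
    (tb : ℝ → ℝ) (htb : ∀ x : ℝ, tb x = (Pi (Set.Ioi x)).toReal)
    (hfin : ∀ x : ℝ, 0 < x → Pi (Set.Ioi x) < ⊤)
    (hrv : ∀ l : ℝ, 0 < l →
      Tendsto (fun x : ℝ => tb (l * x) / tb x) (nhdsWithin 0 (Set.Ioi 0)) (nhds (l ^ (-α))))
    (hinf : Tendsto tb (nhdsWithin 0 (Set.Ioi 0)) atTop) :
    ∃ c' : ℝ, 0 < c' ∧ ∃ β : ℝ, 0 < β ∧ ∃ z₁ : ℝ, 0 < z₁ ∧
      ∀ lam : ℝ, 0 < lam → ∀ t : ℝ, 0 < t → ∀ w y : ℝ, 0 < y → y < w → z₁ ≤ y / t →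
        t * ∫ x in Set.Ioo 0 (geninv tb (w / t)),
            (1 - Real.exp (-lam * x / geninv tb (y / t))) ∂Pi ≤
          c' * lam * y * (y / w) ^ β :=
  stmt11_general α hα1 Pi tb htb hfin hrv hinf
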